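/- Let G be a k×n matrix over GF(2) of rank k with all columns nonzero such that some nonzero vector p₀ ∈ GF(2)^k does not appear among the columns of G. Then the code C generated by G is not subcode-complete: the subcode D = {uG : u ∈ GF(2)^k, u·p₀ = 0} satisfies supp(D) = supp(C) but D ≠ C_{supp(D)}. -/

import Mathlib

/-- The fundamental cone of a binary matrix `H` (entries in `GF(2)`),
    viewed via its support: `x ∈ K(H)` iff all coordinates are nonnegative and
    for every row `j` and every `ℓ` in the support of row `j`,
    `x ℓ ≤ ∑_{i ∈ supp(row j), i ≠ ℓ} x i`. -/
def fundCone {ι κ : Type*} [Fintype ι] [Fintype κ] [DecidableEq κ]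
    (H : Matrix ι κ (ZMod 2)) : Set (κ → ℝ) :=
  {x | (∀ i, 0 ≤ x i) ∧
    ∀ j, ∀ ℓ, H j ℓ = 1 →
      x ℓ ≤ ∑ i ∈ Finset.univ.filter (fun i => H j i = 1 ∧ i ≠ ℓ), x i}

/-- Max-fractional weight: (sum of coordinates)/(max coordinate). -/
noncomputable def wMaxfrac {κ : Type*} [Fintype κ] (x : κ → ℝ) : ℝ :=
  (∑ i, x i) / (⨆ i, x i)

/-- AWGNC pseudoweight. -/
noncomputable def wAWGNC {κ : Type*} [Fintype κ] (x : κ → ℝ) : ℝ :=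
  (∑ i, x i) ^ 2 / (∑ i, (x i) ^ 2)

/-- BEC pseudoweight: size of the support. -/
noncomputable def wBEC {κ : Type*} (x : κ → ℝ) : ℕ :=
  Set.ncard {i | x i ≠ 0}

/-- Hamming weight of a vector over GF(2). -/
def hammingWt {κ : Type*} [Fintype κ] (c : κ → ZMod 2) : ℕ :=
  (Finset.univ.filter (fun i => c i ≠ 0)).card

/-!
Over `GF(2)` the column `g_i` of a coordinate `i ∈ supp C` is neither `0` nor `p₀`, so it lies
outside the line spanned by `p₀` and some `u ⊥ p₀` has `u ⬝ g_i = 1`: the hyperplane subcode `D`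
has the full support of `C`, whence `C_{supp D} = C`. Since `G` has full row rank, `u ↦ uG` is
injective, so `D`, the image of the hyperplane `p₀^⊥`, is a proper subcode of `C`.
-/

open Matrix

theorem Matrix.vecMul_injective_of_rank_eq_card {K m n : Type*} [Field K] [Fintype m]
    [Fintype n] {M : Matrix m n K} (h : M.rank = Fintype.card m) :
    Function.Injective M.vecMul :=
  vecMul_injective_iff.2 <| linearIndependent_iff_card_eq_finrank_span.2 <| by
    rw [← h, rank_eq_finrank_span_row, Set.finrank]

theorem exists_dotProduct_eq_zero_and_eq_one {K ι : Type*} [Field K] [Fintype ι]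
    [DecidableEq ι] {p v : ι → K} (hv : v ∉ K ∙ p) :
    ∃ u : ι → K, u ⬝ᵥ p = 0 ∧ u ⬝ᵥ v = 1 := by
  obtain ⟨f, hfv, hfp⟩ := Submodule.exists_dual_map_eq_bot_of_notMem hv inferInstance
  have hfp : f p = 0 := by
    simpa [hfp] using Submodule.mem_map_of_mem (f := f) (Submodule.mem_span_singleton_self p)
  have hf (w : ι → K) : (dotProductEquiv K ι).symm f ⬝ᵥ w = f w := by
    rw [← dotProductEquiv_apply_apply, LinearEquiv.apply_symm_apply]
  exact ⟨(f v)⁻¹ • (dotProductEquiv K ι).symm f, by simp [hf, hfp], by simp [hf, hfv]⟩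

theorem exists_dotProduct_eq_zero_and_vecMul_apply_ne_zero {K m n : Type*} [Field K]
    [Fintype m] [DecidableEq m] {G : Matrix m n K} {p : m → K} {i : n}
    (hi : (fun j => G j i) ∉ K ∙ p) : ∃ u : m → K, u ⬝ᵥ p = 0 ∧ (u ᵥ* G) i ≠ 0 := by
  obtain ⟨u, hup, hui⟩ := exists_dotProduct_eq_zero_and_eq_one hi
  exact ⟨u, hup, by simp [vecMul, hui]⟩

theorem ZMod.mem_span_singleton_two {ι : Type*} {p v : ι → ZMod 2} :
    v ∈ ZMod 2 ∙ p ↔ v = 0 ∨ v = p := by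
  rw [Submodule.mem_span_singleton]
  constructor
  · rintro ⟨a, rfl⟩
    obtain rfl | rfl : a = 0 ∨ a = 1 := by decide +revert
    exacts [.inl (zero_smul _ _), .inr (one_smul _ _)]
  · rintro (rfl | rfl)
    exacts [⟨0, zero_smul _ _⟩, ⟨1, one_smul _ _⟩]

theorem not_subcodeComplete_of_missing_point_general {k n : ℕ}
    (G : Matrix (Fin k) (Fin n) (ZMod 2)) (hrank : G.rank = k)
    (p₀ : Fin k → ZMod 2) (hp₀ : p₀ ≠ 0)
    (hmiss : ∀ i : Fin n, (fun j => G j i) ≠ p₀) :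
    let C : Set (Fin n → ZMod 2) := Set.range (fun u => Matrix.vecMul u G)
    let D : Set (Fin n → ZMod 2) :=
      {c | ∃ u : Fin k → ZMod 2, dotProduct u p₀ = 0 ∧ c = Matrix.vecMul u G}
    ({i | ∃ c ∈ D, c i ≠ 0} = {i | ∃ c ∈ C, c i ≠ 0}) ∧
    D ≠ {c | c ∈ C ∧ ∀ i, c i ≠ 0 → ∃ c' ∈ D, c' i ≠ 0} := by
  intro C D
  have hsupp : ∀ i, (∃ c ∈ C, c i ≠ 0) → ∃ c ∈ D, c i ≠ 0 := by
    rintro i ⟨_, ⟨w, rfl⟩, hwi⟩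
    have hcol : (fun j => G j i) ∉ ZMod 2 ∙ p₀ := by
      rw [ZMod.mem_span_singleton_two]
      rintro (hzero | hp)
      exacts [hwi (by simp [vecMul, hzero]), hmiss i hp]
    obtain ⟨u, hup, hui⟩ := exists_dotProduct_eq_zero_and_vecMul_apply_ne_zero hcol
    exact ⟨_, ⟨u, hup, rfl⟩, hui⟩
  refine ⟨Set.Subset.antisymm ?_ hsupp, fun hD => ?_⟩
  · rintro i ⟨_, ⟨u, -, rfl⟩, hui⟩
    exact ⟨_, ⟨u, rfl⟩, hui⟩
  obtain ⟨w, -, hw⟩ := exists_dotProduct_eq_zero_and_eq_one (p := 0) (v := p₀) (by simpa)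
  obtain ⟨u, hu, huw⟩ : w ᵥ* G ∈ D :=
    hD ▸ ⟨⟨w, rfl⟩, fun i hi => hsupp i ⟨_, ⟨w, rfl⟩, hi⟩⟩
  rw [← vecMul_injective_of_rank_eq_card (by simpa) huw, hw] at hu
  exact one_ne_zero hu

/-- If some nonzero p₀ does not appear among the columns of G, then the code is
    not subcode-complete: the hyperplane subcode D = {uG : u ⬝ p₀ = 0} has full
    support but differs from the shortened subcode on its support. -/
theorem not_subcodeComplete_of_missing_point {k n : ℕ}
    (G : Matrix (Fin k) (Fin n) (ZMod 2)) (hrank : G.rank = k)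
    (hcols : ∀ i : Fin n, (fun j => G j i) ≠ 0)
    (p₀ : Fin k → ZMod 2) (hp₀ : p₀ ≠ 0)
    (hmiss : ∀ i : Fin n, (fun j => G j i) ≠ p₀) :
    let C : Set (Fin n → ZMod 2) := Set.range (fun u => Matrix.vecMul u G)
    let D : Set (Fin n → ZMod 2) :=
      {c | ∃ u : Fin k → ZMod 2, dotProduct u p₀ = 0 ∧ c = Matrix.vecMul u G}
    ({i | ∃ c ∈ D, c i ≠ 0} = {i | ∃ c ∈ C, c i ≠ 0}) ∧
    D ≠ {c | c ∈ C ∧ ∀ i, c i ≠ 0 → ∃ c' ∈ D, c' i ≠ 0} :=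
  not_subcodeComplete_of_missing_point_general G hrank p₀ hp₀ hmiss
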